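/- If a signed eulerian graph G is the union of two eulerian subgraphs each having an even number of negative edges, then G admits a nowhere-zero 4-flow. -/

import Mathlib

open Finset

/-- A signed multigraph on vertex type `V` with edge type `E`: each edge `e`
consists of two half-edges indexed by `Bool`; `ends e i` is the end-vertex at
which the half-edge `(e, i)` is attached (loops and multiple edges are
allowed), and `sign e ∈ {1, -1}` is the sign of the edge `e`. -/
structure SignedGraph (V E : Type) where
  ends : E → Bool → V
  sign : E → ℤˣ

namespace SignedGraph

variable {V E : Type} [Fintype V] [Fintype E] [DecidableEq V] [DecidableEq E]

/-- The valency of `v` in the subgraph spanned by the edge set `S`: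
the number of half-edges of edges of `S` attached at `v` (a loop at `v`
contributes `2`). -/
def valencyOn (G : SignedGraph V E) (S : Finset E) (v : V) : ℕ :=
  (univ.filter fun p : E × Bool => p.1 ∈ S ∧ G.ends p.1 p.2 = v).card

/-- The valency of a vertex in `G`. -/
def valency (G : SignedGraph V E) (v : V) : ℕ :=
  G.valencyOn univ v

/-- The set of vertices incident with some edge of `S`. -/
def suppV (G : SignedGraph V E) (S : Finset E) : Finset V :=
  univ.filter fun v => ∃ e ∈ S, ∃ i : Bool, G.ends e i = v

/-- `u` and `v` are joined by an edge of `S`. -/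
def AdjOn (G : SignedGraph V E) (S : Finset E) (u v : V) : Prop :=
  ∃ e ∈ S, ∃ i : Bool, G.ends e i = u ∧ G.ends e (!i) = v

/-- The subgraph spanned by the edge set `S` is connected: any two vertices
incident with edges of `S` are joined by a walk using edges of `S`. -/
def ConnOn (G : SignedGraph V E) (S : Finset E) : Prop :=
  ∀ u ∈ G.suppV S, ∀ v ∈ G.suppV S, Relation.ReflTransGen (G.AdjOn S) u v

/-- `G` is connected (as a graph on the whole vertex set `V`). -/
def Connected (G : SignedGraph V E) : Prop :=
  Nonempty V ∧ ∀ u v : V, Relation.ReflTransGen (G.AdjOn univ) u v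

/-- The edge set `S` spans a circuit: a nonempty connected `2`-regular
subgraph. -/
def IsCircuit (G : SignedGraph V E) (S : Finset E) : Prop :=
  S.Nonempty ∧ G.ConnOn S ∧ ∀ v ∈ G.suppV S, G.valencyOn S v = 2

/-- The sign of a set of edges: the product of the signs of its edges. -/
def signOf (G : SignedGraph V E) (S : Finset E) : ℤˣ :=
  ∏ e ∈ S, G.sign e

/-- The negative edges among `S`. -/
def negEdges (G : SignedGraph V E) (S : Finset E) : Finset E :=
  S.filter fun e => G.sign e = -1

/-- A balanced circuit: a circuit of sign `+1`. -/
def IsBalancedCircuit (G : SignedGraph V E) (S : Finset E) : Prop :=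
  G.IsCircuit S ∧ G.signOf S = 1

/-- An unbalanced circuit: a circuit of sign `-1`. -/
def IsUnbalancedCircuit (G : SignedGraph V E) (S : Finset E) : Prop :=
  G.IsCircuit S ∧ G.signOf S = -1

/-- `G` is balanced: it contains no unbalanced circuit. -/
def Balanced (G : SignedGraph V E) : Prop :=
  ∀ S : Finset E, G.IsCircuit S → G.signOf S = 1

/-- `G` is tightly unbalanced: it is unbalanced, but for some edge `f` the
graph `G - f` is balanced. -/
def TightlyUnbalanced (G : SignedGraph V E) : Prop :=
  ¬ G.Balanced ∧ ∃ f : E, ∀ S : Finset E, G.IsCircuit S → f ∉ S → G.signOf S = 1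

/-- `G` is eulerian: connected with all valencies even. -/
def Eulerian (G : SignedGraph V E) : Prop :=
  G.Connected ∧ ∀ v : V, Even (G.valency v)

/-- The edge set `S` spans an eulerian subgraph of `G`. -/
def EulerianOn (G : SignedGraph V E) (S : Finset E) : Prop :=
  S.Nonempty ∧ G.ConnOn S ∧ ∀ v : V, Even (G.valencyOn S v)

/-- An orientation (bidirection) of `G`: `dir e i = true` means that the
half-edge `(e, i)` is directed towards its end-vertex, `dir e i = false` that
it is directed away from it.  Compatibility: a positive edge becomes an
ordinary directed edge (one half-edge in, one out) and a negative edge becomes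
a broken (extroverted or introverted) edge. -/
structure Orientation (G : SignedGraph V E) where
  dir : E → Bool → Bool
  compat : ∀ e : E, G.sign e = 1 ↔ dir e false ≠ dir e true

/-- `φ` is a flow on `G` with respect to the orientation `O`: at every vertex
`v`, the sum of values on half-edges directed into `v` equals the sum of
values on half-edges directed out of `v` (Kirchhoff's law). -/
def IsFlow {A : Type} [AddCommGroup A] (G : SignedGraph V E)
    (O : G.Orientation) (φ : E → A) : Prop :=
  ∀ v : V,
    ∑ p ∈ univ.filter (fun p : E × Bool => G.ends p.1 p.2 = v),
      (if O.dir p.1 p.2 then φ p.1 else -φ p.1) = 0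

/-- `G` admits a nowhere-zero `A`-flow. -/
def HasNZFlow (G : SignedGraph V E) (A : Type) [AddCommGroup A] : Prop :=
  ∃ (O : G.Orientation) (φ : E → A), G.IsFlow O φ ∧ ∀ e : E, φ e ≠ 0

/-- `G` is flow-admissible: it admits a nowhere-zero integer flow. -/
def FlowAdmissible (G : SignedGraph V E) : Prop :=
  ∃ (O : G.Orientation) (φ : E → ℤ), G.IsFlow O φ ∧ ∀ e : E, φ e ≠ 0

/-- `G` admits a nowhere-zero `k`-flow: an integer flow with all values in
`{±1, …, ±(k-1)}`. -/
def HasNZkFlow (G : SignedGraph V E) (k : ℕ) : Prop :=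
  ∃ (O : G.Orientation) (φ : E → ℤ), G.IsFlow O φ ∧
    ∀ e : E, φ e ≠ 0 ∧ |φ e| < (k : ℤ)

/-- `G` is triply odd: it can be decomposed into three edge-disjoint eulerian
subgraphs, each with an odd number of negative edges, sharing a common
vertex. -/
def TriplyOdd (G : SignedGraph V E) : Prop :=
  ∃ S₁ S₂ S₃ : Finset E,
    Disjoint S₁ S₂ ∧ Disjoint S₁ S₃ ∧ Disjoint S₂ S₃ ∧
    S₁ ∪ S₂ ∪ S₃ = univ ∧
    G.EulerianOn S₁ ∧ G.EulerianOn S₂ ∧ G.EulerianOn S₃ ∧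
    Odd (G.negEdges S₁).card ∧ Odd (G.negEdges S₂).card ∧
    Odd (G.negEdges S₃).card ∧
    ∃ v : V, v ∈ G.suppV S₁ ∧ v ∈ G.suppV S₂ ∧ v ∈ G.suppV S₃

/-- The edge set `P` spans a (nontrivial) path from `u` to `v`: a connected
subgraph in which `u` and `v` have valency `1` and all other vertices have
valency `2`. -/
def IsPathOn (G : SignedGraph V E) (P : Finset E) (u v : V) : Prop :=
  u ≠ v ∧ G.ConnOn P ∧ u ∈ G.suppV P ∧ v ∈ G.suppV P ∧
  G.valencyOn P u = 1 ∧ G.valencyOn P v = 1 ∧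
  ∀ w ∈ G.suppV P, w ≠ u → w ≠ v → G.valencyOn P w = 2

/-- `T` spans a signed circuit of type (2): the union of two unbalanced
circuits meeting at a single vertex. -/
def IsType2 (G : SignedGraph V E) (T : Finset E) : Prop :=
  ∃ (S₁ S₂ : Finset E) (v : V),
    G.IsUnbalancedCircuit S₁ ∧ G.IsUnbalancedCircuit S₂ ∧ Disjoint S₁ S₂ ∧
    G.suppV S₁ ∩ G.suppV S₂ = {v} ∧ S₁ ∪ S₂ = T

/-- `T` spans a signed circuit of type (3): the union of two vertex-disjoint
unbalanced circuits together with a path meeting the circuits only at its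
ends. -/
def IsType3 (G : SignedGraph V E) (T : Finset E) : Prop :=
  ∃ (S₁ S₂ P : Finset E) (u v : V),
    G.IsUnbalancedCircuit S₁ ∧ G.IsUnbalancedCircuit S₂ ∧
    Disjoint (G.suppV S₁) (G.suppV S₂) ∧
    G.IsPathOn P u v ∧ u ∈ G.suppV S₁ ∧ v ∈ G.suppV S₂ ∧
    G.suppV P ∩ G.suppV S₁ = {u} ∧ G.suppV P ∩ G.suppV S₂ = {v} ∧
    Disjoint P (S₁ ∪ S₂) ∧ S₁ ∪ S₂ ∪ P = T

/-- `T` spans a signed circuit: a balanced circuit, or a signed circuit of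
type (2) or (3). -/
def IsSignedCircuit (G : SignedGraph V E) (T : Finset E) : Prop :=
  G.IsBalancedCircuit T ∨ G.IsType2 T ∨ G.IsType3 T

/-- `T` spans a weak unbalanced bicircuit: two edge-disjoint unbalanced
circuits (not necessarily vertex-disjoint) joined by a possibly trivial path
having no edge in the two circuits. -/
def IsWeakBicircuit (G : SignedGraph V E) (T : Finset E) : Prop :=
  ∃ C₁ C₂ : Finset E,
    G.IsUnbalancedCircuit C₁ ∧ G.IsUnbalancedCircuit C₂ ∧ Disjoint C₁ C₂ ∧
    (((∃ v : V, v ∈ G.suppV C₁ ∧ v ∈ G.suppV C₂) ∧ T = C₁ ∪ C₂) ∨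
      ∃ (P : Finset E) (u v : V),
        G.IsPathOn P u v ∧ u ∈ G.suppV C₁ ∧ v ∈ G.suppV C₂ ∧
        Disjoint P (C₁ ∪ C₂) ∧ T = C₁ ∪ C₂ ∪ P)

/-- Every connected component of `G - f` contains an unbalanced circuit,
i.e. `G - f` has no balanced component. -/
def NoBalancedComponentAvoiding (G : SignedGraph V E) (f : E) : Prop :=
  ∀ u : V, ∃ S : Finset E,
    G.IsCircuit S ∧ G.signOf S = -1 ∧ f ∉ S ∧
    ∀ w ∈ G.suppV S, Relation.ReflTransGen (G.AdjOn (univ.erase f)) w u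

/-- `G` is 2-edge-connected: connected, and still connected after removing
any single edge. -/
def TwoEdgeConnected (G : SignedGraph V E) : Prop :=
  G.Connected ∧ ∀ f : E, ∀ u v : V,
    Relation.ReflTransGen (G.AdjOn (univ.erase f)) u v

/-- `G` is antibalanced: replacing its signature `σ` by `-σ` makes it
balanced. -/
def Antibalanced (G : SignedGraph V E) : Prop :=
  ∀ S : Finset E, G.IsCircuit S → (∏ e ∈ S, (-G.sign e)) = 1

end SignedGraph
namespace SignedGraph

set_option linter.unusedSectionVars false

open Finset List

variable {V E : Type} [Fintype V] [Fintype E] [DecidableEq V] [DecidableEq E]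

/-- start vertex of a step -/
def stS (G : SignedGraph V E) (p : E × Bool) : V := G.ends p.1 p.2
/-- end vertex of a step -/
def stE (G : SignedGraph V E) (p : E × Bool) : V := G.ends p.1 (!p.2)

/-- edges of a list of steps -/
def edgesOf (L : List (E × Bool)) : Finset E := (L.map Prod.fst).toFinset

lemma valencyOn_union (G : SignedGraph V E) {S T : Finset E} (h : Disjoint S T) (v : V) :
    G.valencyOn (S ∪ T) v = G.valencyOn S v + G.valencyOn T v := by
  unfold valencyOn
  have hst : (univ.filter fun p : E × Bool => p.1 ∈ S ∪ T ∧ G.ends p.1 p.2 = v)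
      = (univ.filter fun p : E × Bool => p.1 ∈ S ∧ G.ends p.1 p.2 = v)
        ∪ (univ.filter fun p : E × Bool => p.1 ∈ T ∧ G.ends p.1 p.2 = v) := by
    ext p
    simp only [Finset.mem_filter, Finset.mem_union, Finset.mem_univ, true_and, or_and_right]
  rw [hst, card_union_of_disjoint]
  rw [Finset.disjoint_left]
  intro p hp hq
  rw [Finset.mem_filter] at hp hq
  exact (Finset.disjoint_left.1 h hp.2.1 hq.2.1)

lemma valencyOn_singleton (G : SignedGraph V E) (e : E) (v : V) :
    G.valencyOn {e} v
      = (if G.ends e false = v then 1 else 0) + (if G.ends e true = v then 1 else 0) := by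
  classical
  rw [valencyOn, card_filter, Fintype.sum_prod_type]
  have : ∀ a : E, (∑ b : Bool, if a ∈ ({e} : Finset E) ∧ G.ends a b = v then 1 else 0)
      = if a = e then ((if G.ends e false = v then 1 else 0) + (if G.ends e true = v then 1 else 0)) else 0 := by
    intro a
    by_cases ha : a = e
    · subst ha
      rw [Fintype.sum_bool]
      simp [add_comm]
    · simp [ha]
  rw [Finset.sum_congr rfl (fun a _ => this a)]
  simp

lemma valencyOn_insert (G : SignedGraph V E) {e : E} {S : Finset E} (he : e ∉ S) (v : V) :
    G.valencyOn (insert e S) v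
      = ((if G.ends e false = v then 1 else 0) + (if G.ends e true = v then 1 else 0))
        + G.valencyOn S v := by
  rw [Finset.insert_eq, valencyOn_union G (Finset.disjoint_singleton_left.mpr he),
    valencyOn_singleton]

lemma valencyOn_sdiff (G : SignedGraph V E) {S T : Finset E} (h : T ⊆ S) (v : V) :
    G.valencyOn S v = G.valencyOn T v + G.valencyOn (S \ T) v := by
  rw [← valencyOn_union G (Finset.disjoint_sdiff), Finset.union_sdiff_of_subset h]

lemma mem_suppV {G : SignedGraph V E} {S : Finset E} {v : V} :
    v ∈ G.suppV S ↔ ∃ e ∈ S, ∃ i : Bool, G.ends e i = v := by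
  simp [suppV]

lemma signOf_eq_one_of_even {G : SignedGraph V E} {S : Finset E}
    (hev : Even (G.negEdges S).card) : G.signOf S = 1 := by
  classical
  rw [signOf, ← Finset.prod_filter_mul_prod_filter_not S (fun e => G.sign e = -1)]
  have h1 : (∏ e ∈ S.filter fun e => G.sign e = -1, G.sign e) = (-1 : ℤˣ) ^ (G.negEdges S).card := by
    rw [negEdges, Finset.prod_congr rfl (fun e he => (Finset.mem_filter.1 he).2),
      Finset.prod_const]
  have h2 : (∏ e ∈ S.filter fun e => ¬ G.sign e = -1, G.sign e) = 1 := by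
    apply Finset.prod_eq_one
    intro e he
    rcases Int.units_eq_one_or (G.sign e) with h | h
    · exact h
    · exact absurd h (Finset.mem_filter.1 he).2
  rw [h1, h2, hev.neg_one_pow, one_mul]

end SignedGraph
namespace SignedGraph

set_option linter.unusedSectionVars false

open Finset List

variable {V E : Type} [Fintype V] [Fintype E] [DecidableEq V] [DecidableEq E]

/-- A trail in the subgraph spanned by `S`. -/
def IsTrailOn (G : SignedGraph V E) (S : Finset E) (L : List (E × Bool)) : Prop :=
  (L.map Prod.fst).Nodup ∧ List.Chain' (fun p q => G.stE p = G.stS q) L ∧ edgesOf L ⊆ S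

/-- A closed list of steps. -/
def IsClosedL (G : SignedGraph V E) (L : List (E × Bool)) : Prop :=
  ∀ h : L ≠ [], G.stE (L.getLast h) = G.stS (L.head h)

lemma ends_indicator (G : SignedGraph V E) (p : E × Bool) (v : V) :
    (if G.ends p.1 false = v then 1 else 0) + (if G.ends p.1 true = v then 1 else 0)
      = (if G.stS p = v then 1 else 0) + (if G.stE p = v then (1 : ℕ) else 0) := by
  rcases p with ⟨e, i⟩
  cases i
  · rfl
  · exact Nat.add_comm _ _

lemma trail_parity (G : SignedGraph V E) :
    ∀ (L : List (E × Bool)) (p : E × Bool),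
      ((p :: L).map Prod.fst).Nodup →
      List.Chain' (fun a b => G.stE a = G.stS b) (p :: L) →
      ∀ v : V,
      Even (G.valencyOn (edgesOf (p :: L)) v
        + ((if G.stS p = v then 1 else 0)
          + (if G.stE ((p :: L).getLast (List.cons_ne_nil p L)) = v then 1 else 0))) := by
  intro L
  induction L with
  | nil =>
    intro p _ _ v
    have h1 : edgesOf [p] = {p.1} := by simp [edgesOf]
    rw [h1, valencyOn_singleton, ends_indicator]
    exact ⟨_, rfl⟩
  | cons q L' ih =>
    intro p hnd hch v
    have hpq : G.stE p = G.stS q := (List.isChain_cons_cons.1 hch).1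
    have hch' : List.Chain' (fun a b => G.stE a = G.stS b) (q :: L') :=
      (List.isChain_cons_cons.1 hch).2
    rw [List.map_cons, List.nodup_cons] at hnd
    have hnd' : ((q :: L').map Prod.fst).Nodup := hnd.2
    have hpmem : p.1 ∉ edgesOf (q :: L') := by
      simpa [edgesOf] using hnd.1
    have hedges : edgesOf (p :: q :: L') = insert p.1 (edgesOf (q :: L')) := by
      simp [edgesOf]
    have hlast : (p :: q :: L').getLast (List.cons_ne_nil _ _)
        = (q :: L').getLast (List.cons_ne_nil _ _) := List.getLast_cons (List.cons_ne_nil _ _)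
    have IH := ih q hnd' hch' v
    rw [hedges, valencyOn_insert G hpmem, ends_indicator, hlast, hpq]
    rw [Nat.even_iff] at IH ⊢
    set x1 := (if G.stS p = v then 1 else 0) with hx1
    set x2 := (if G.stS q = v then 1 else 0) with hx2
    set x3 := (if G.stE ((q :: L').getLast (List.cons_ne_nil _ _)) = v then 1 else 0) with hx3
    set c := G.valencyOn (edgesOf (q :: L')) v with hc
    omega

end SignedGraph
namespace SignedGraph

set_option linter.unusedSectionVars false

open Finset List

variable {V E : Type} [Fintype V] [Fintype E] [DecidableEq V] [DecidableEq E]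

lemma closed_even (G : SignedGraph V E) {L : List (E × Bool)} (hne : L ≠ [])
    (hnd : (L.map Prod.fst).Nodup) (hch : List.Chain' (fun a b => G.stE a = G.stS b) L)
    (hcl : G.IsClosedL L) (v : V) : Even (G.valencyOn (edgesOf L) v) := by
  obtain ⟨p, L0, rfl⟩ := List.exists_cons_of_ne_nil hne
  have h := trail_parity G L0 p hnd hch v
  have hc : G.stE ((p :: L0).getLast (List.cons_ne_nil p L0)) = G.stS p := hcl hne
  rw [hc] at h
  rw [Nat.even_iff] at h ⊢
  set x := (if G.stS p = v then 1 else 0)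
  omega

lemma trail_step (G : SignedGraph V E) (S : Finset E) (hval : ∀ v, Even (G.valencyOn S v))
    (L : List (E × Bool)) (hne : L ≠ []) (hT : G.IsTrailOn S L) (hnc : ¬ G.IsClosedL L) :
    ∃ q : E × Bool, q.1 ∈ S \ edgesOf L ∧ G.IsTrailOn S (L ++ [q]) ∧
      (L ++ [q]).head (by simp [hne]) = L.head hne := by
  obtain ⟨hnd, hch, hsub⟩ := hT
  obtain ⟨p, L0, rfl⟩ := List.exists_cons_of_ne_nil hne
  have hcl : G.stE ((p :: L0).getLast (List.cons_ne_nil p L0)) ≠ G.stS p := by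
    intro h
    exact hnc (fun _ => h)
  set w := G.stE ((p :: L0).getLast (List.cons_ne_nil p L0)) with hwdef
  have hpar := trail_parity G L0 p hnd hch w
  rw [← hwdef, if_pos rfl, if_neg (fun h : G.stS p = w => hcl h.symm)] at hpar
  have hsd := G.valencyOn_sdiff hsub w
  have hodd : ¬ Even (G.valencyOn (S \ edgesOf (p :: L0)) w) := by
    have hv := hval w
    rw [hsd, Nat.even_iff] at hv
    rw [Nat.even_iff] at hpar ⊢
    omega
  have hpos : 0 < G.valencyOn (S \ edgesOf (p :: L0)) w :=
    Nat.pos_of_ne_zero (fun h0 => hodd (by rw [h0]; exact Even.zero))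
  rw [valencyOn, Finset.card_pos] at hpos
  obtain ⟨q, hq⟩ := hpos
  rw [Finset.mem_filter] at hq
  obtain ⟨-, hq1, hq2⟩ := hq
  refine ⟨q, hq1, ⟨?_, ?_, ?_⟩, rfl⟩
  · rw [List.map_append]
    refine hnd.append (by simp) ?_
    intro a ha hb
    rw [List.map_singleton, List.mem_singleton] at hb
    subst hb
    exact (Finset.mem_sdiff.1 hq1).2 (by simpa [edgesOf] using ha)
  · refine List.isChain_append.2 ⟨hch, List.isChain_singleton q, ?_⟩
    intro x hx y hy
    rw [List.getLast?_eq_getLast (List.cons_ne_nil p L0), Option.mem_some_iff] at hx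
    simp only [List.head?_cons, Option.mem_some_iff] at hy
    subst hx; subst hy
    exact hq2.symm
  · have : edgesOf ((p :: L0) ++ [q]) = edgesOf (p :: L0) ∪ {q.1} := by
      simp [edgesOf, List.map_append]
    rw [this]
    exact Finset.union_subset hsub
      (Finset.singleton_subset_iff.2 ((Finset.mem_sdiff.1 hq1).1))

lemma exists_closed_from (G : SignedGraph V E) (S : Finset E)
    (hval : ∀ v, Even (G.valencyOn S v)) :
    ∀ (n : ℕ) (L : List (E × Bool)) (hne : L ≠ []), G.IsTrailOn S L →
      (S \ edgesOf L).card ≤ n →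
      ∃ (L' : List (E × Bool)) (hne' : L' ≠ []), G.IsTrailOn S L' ∧ G.IsClosedL L' ∧
        L'.head hne' = L.head hne := by
  intro n
  induction n with
  | zero =>
    intro L hne hT hcard
    by_cases hc : G.IsClosedL L
    · exact ⟨L, hne, hT, hc, rfl⟩
    · exfalso
      obtain ⟨q, hq, -, -⟩ := trail_step G S hval L hne hT hc
      have hemp : S \ edgesOf L = ∅ := Finset.card_eq_zero.1 (Nat.le_zero.1 hcard)
      rw [hemp] at hq
      exact absurd hq (Finset.notMem_empty _)
  | succ n ih =>
    intro L hne hT hcard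
    by_cases hc : G.IsClosedL L
    · exact ⟨L, hne, hT, hc, rfl⟩
    · obtain ⟨q, hq, hT', hhead⟩ := trail_step G S hval L hne hT hc
      have hne' : L ++ [q] ≠ [] := by simp
      have hcard' : (S \ edgesOf (L ++ [q])).card ≤ n := by
        have hss : S \ edgesOf (L ++ [q]) ⊂ S \ edgesOf L := by
          constructor
          · apply Finset.sdiff_subset_sdiff (le_refl S)
            intro a ha
            simp only [edgesOf, List.map_append, List.toFinset_append, Finset.mem_union]
            exact Or.inl (by simpa [edgesOf] using ha)
          · intro habs
            have h1 : q.1 ∈ S \ edgesOf L := hq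
            have h2 := habs h1
            rw [Finset.mem_sdiff] at h2
            exact h2.2 (by simp [edgesOf, List.map_append])
        have := Finset.card_lt_card hss
        omega
      obtain ⟨L'', hne'', hT'', hc'', hh''⟩ := ih (L ++ [q]) hne' hT' hcard'
      exact ⟨L'', hne'', hT'', hc'', by rw [hh'']; exact hhead⟩

lemma exists_closed_at (G : SignedGraph V E) (S : Finset E)
    (hval : ∀ v, Even (G.valencyOn S v)) {u : V} (hu : u ∈ G.suppV S) :
    ∃ (L : List (E × Bool)) (hne : L ≠ []), G.IsTrailOn S L ∧ G.IsClosedL L ∧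
      G.stS (L.head hne) = u := by
  obtain ⟨e, he, i, hei⟩ := mem_suppV.1 hu
  have hT : G.IsTrailOn S [(e, i)] := by
    refine ⟨by simp, List.isChain_singleton _, ?_⟩
    simp only [edgesOf, List.map_singleton, List.toFinset_cons, List.toFinset_nil,
      LawfulSingleton.insert_empty_eq]
    exact Finset.singleton_subset_iff.2 he
  obtain ⟨L, hne, hT', hcl, hh⟩ :=
    exists_closed_from G S hval (S \ edgesOf [(e, i)]).card [(e, i)] (by simp) hT le_rfl
  refine ⟨L, hne, hT', hcl, ?_⟩
  rw [hh]
  exact hei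

end SignedGraph
namespace SignedGraph

set_option linter.unusedSectionVars false

open Finset List

variable {V E : Type} [Fintype V] [Fintype E] [DecidableEq V] [DecidableEq E]

lemma exists_junction (G : SignedGraph V E) {S T : Finset E} (hconn : G.ConnOn S)
    (hTS : T ⊆ S) (hT : T.Nonempty) (hST : (S \ T).Nonempty) :
    ∃ w, w ∈ G.suppV T ∧ w ∈ G.suppV (S \ T) := by
  by_contra hcon
  push_neg at hcon
  have hclosure : ∀ x y, Relation.ReflTransGen (G.AdjOn S) x y →
      x ∈ G.suppV T → y ∈ G.suppV T := by
    intro x y hxy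
    induction hxy with
    | refl => exact id
    | tail hab hbc ihb =>
      intro hx
      have hb := ihb hx
      obtain ⟨e, he, i, hei, hei'⟩ := hbc
      by_cases heT : e ∈ T
      · exact mem_suppV.2 ⟨e, heT, !i, hei'⟩
      · exact absurd (mem_suppV.2 ⟨e, Finset.mem_sdiff.2 ⟨he, heT⟩, i, hei⟩) (hcon _ hb)
  obtain ⟨e, heT⟩ := hT
  obtain ⟨f, hfST⟩ := hST
  have ha : G.ends e false ∈ G.suppV T := mem_suppV.2 ⟨e, heT, false, rfl⟩
  have hb : G.ends f false ∈ G.suppV (S \ T) := mem_suppV.2 ⟨f, hfST, false, rfl⟩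
  have haS : G.ends e false ∈ G.suppV S := mem_suppV.2 ⟨e, hTS heT, false, rfl⟩
  have hbS : G.ends f false ∈ G.suppV S :=
    mem_suppV.2 ⟨f, (Finset.mem_sdiff.1 hfST).1, false, rfl⟩
  exact hcon _ (hclosure _ _ (hconn _ haS _ hbS) ha) hb

lemma head_congr {α : Type*} {l l' : List α} (h : l = l') (h1 : l ≠ []) :
    l.head h1 = l'.head (h ▸ h1) := by subst h; rfl

lemma getLast_congr {α : Type*} {l l' : List α} (h : l = l') (h1 : l ≠ []) :
    l.getLast h1 = l'.getLast (h ▸ h1) := by subst h; rfl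

lemma closed_get (G : SignedGraph V E) {L : List (E × Bool)}
    (hch : List.Chain' (fun a b => G.stE a = G.stS b) L) (hcl : G.IsClosedL L)
    (k : ℕ) (hk : k < L.length) :
    G.stE (L.get ⟨k, hk⟩)
      = G.stS (L.get ⟨(k + 1) % L.length, Nat.mod_lt _ (by omega)⟩) := by
  by_cases h : k + 1 < L.length
  · have h2 : (⟨(k + 1) % L.length, Nat.mod_lt _ (by omega)⟩ : Fin L.length) = ⟨k + 1, h⟩ :=
      Fin.ext (Nat.mod_eq_of_lt h)
    rw [h2]
    exact List.isChain_iff_getElem.1 hch k (by omega)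
  · have hne : L ≠ [] := by rintro rfl; simp at hk
    have hk1 : k + 1 = L.length := by omega
    have h2 : (⟨(k + 1) % L.length, Nat.mod_lt _ (by omega)⟩ : Fin L.length)
        = ⟨0, by omega⟩ := Fin.mk_eq_mk.2 (by rw [hk1]; exact Nat.mod_self _)
    have h3 : (⟨k, hk⟩ : Fin L.length) = ⟨L.length - 1, by omega⟩ := Fin.mk_eq_mk.2 (by omega)
    rw [h2, h3]; simp only [List.get_eq_getElem]; rw [← List.getLast_eq_getElem hne, List.getElem_zero]
    exact hcl hne

lemma exists_start_index (G : SignedGraph V E) {L : List (E × Bool)}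
    (hch : List.Chain' (fun a b => G.stE a = G.stS b) L) (hcl : G.IsClosedL L)
    {w : V} (hw : w ∈ G.suppV (edgesOf L)) :
    ∃ k : Fin L.length, G.stS (L.get k) = w := by
  obtain ⟨e, he, i, hei⟩ := mem_suppV.1 hw
  rw [edgesOf, List.mem_toFinset] at he
  obtain ⟨n, hn⟩ := List.mem_iff_get.1 he
  have hlt : n.val < L.length := by simpa using n.isLt
  have hk : (L.get ⟨n.val, hlt⟩).1 = e := by
    rw [← hn]; simp
  by_cases hi : (L.get ⟨n.val, hlt⟩).2 = i
  · refine ⟨⟨n.val, hlt⟩, ?_⟩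
    rw [stS, hk, hi]
    exact hei
  · have hi' : i = !(L.get ⟨n.val, hlt⟩).2 := by
      cases hb : (L.get ⟨n.val, hlt⟩).2 <;> cases i <;> simp_all
    have hE : G.stE (L.get ⟨n.val, hlt⟩) = w := by
      rw [stE, hk, ← hi']
      exact hei
    refine ⟨⟨(n.val + 1) % L.length, Nat.mod_lt _ (by omega)⟩, ?_⟩
    rw [← closed_get G hch hcl n.val hlt]
    exact hE

lemma rotate_trail (G : SignedGraph V E) {S : Finset E} {L : List (E × Bool)}
    (hT : G.IsTrailOn S L) (hcl : G.IsClosedL L) (k : Fin L.length) :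
    ∃ (L' : List (E × Bool)) (hne' : L' ≠ []), G.IsTrailOn S L' ∧ G.IsClosedL L' ∧
      edgesOf L' = edgesOf L ∧ G.stS (L'.head hne') = G.stS (L.get k) := by
  obtain ⟨hnd, hch, hsub⟩ := hT
  have hLne : L ≠ [] := by rintro rfl; exact absurd k.isLt (by simp)
  by_cases hk0 : k.val = 0
  · refine ⟨L, hLne, ⟨hnd, hch, hsub⟩, hcl, rfl, ?_⟩
    have hgk : L.get k = L.head hLne := by
      rw [show k = ⟨0, k.pos⟩ from Fin.ext hk0]
      exact List.get_mk_zero k.pos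
    rw [hgk]
  · set A := L.take k.val with hAdef
    set B := L.drop k.val with hBdef
    have hAB : A ++ B = L := List.take_append_drop _ _
    have hAne : A ≠ [] := by
      intro h
      have := congrArg List.length h
      simp only [hAdef, List.length_take, List.length_nil] at this
      have := k.isLt
      omega
    have hBne : B ≠ [] := by
      intro h
      have := congrArg List.length h
      simp only [hBdef, List.length_drop, List.length_nil] at this
      have := k.isLt
      omega
    have hperm : (B ++ A).Perm L := by
      rw [← hAB]
      exact List.perm_append_comm
    have hedges : edgesOf (B ++ A) = edgesOf L := by
      simp only [edgesOf, List.map_append, List.toFinset_append]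
      rw [Finset.union_comm, ← List.toFinset_append, ← List.map_append, hAB]
    have hlastL : L.getLast hLne = B.getLast hBne := by
      rw [getLast_congr hAB.symm hLne, List.getLast_append]
      simp [hBne]
    have hheadL : L.head hLne = A.head hAne := by
      rw [head_congr hAB.symm hLne, List.head_append]
      simp [hAne]
    have hlink := (List.isChain_append.1 (by rw [hAB]; exact hch)).2.2
    have hseam : G.stE (A.getLast hAne) = G.stS (B.head hBne) := by
      apply hlink
      · rw [List.getLast?_eq_getLast hAne]; rfl
      · rw [List.head?_eq_head _]; rfl
    refine ⟨B ++ A, by simp [hBne], ⟨?_, ?_, ?_⟩, ?_, hedges, ?_⟩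
    · exact ((hperm.map Prod.fst).nodup_iff).2 hnd
    · refine List.isChain_append.2 ⟨hch.suffix ⟨A, hAB⟩, hch.prefix ⟨B, hAB⟩, ?_⟩
      intro x hx y hy
      rw [List.getLast?_eq_getLast hBne, Option.mem_some_iff] at hx
      rw [List.head?_eq_head hAne, Option.mem_some_iff] at hy
      subst hx; subst hy
      rw [← hlastL, ← hheadL]
      exact hcl hLne
    · rw [hedges]; exact hsub
    · intro hne'
      have h1 : (B ++ A).getLast hne' = A.getLast hAne := by
        rw [List.getLast_append]
        simp [hAne]
      have h2 : (B ++ A).head hne' = B.head hBne := by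
        rw [List.head_append]
        simp [hBne]
      rw [h1, h2]
      exact hseam
    · have h2 : (B ++ A).head (by simp [hBne]) = B.head hBne := by
        rw [List.head_append]
        simp [hBne]
      rw [h2]
      have h3 : B.head hBne = L.get k := by
        rw [head_congr hBdef hBne, List.head_drop]
        exact (List.get_eq_getElem).symm
      rw [h3]

lemma splice_closed (G : SignedGraph V E) {S : Finset E} {C T : List (E × Bool)}
    (hCne : C ≠ []) (hTne : T ≠ []) (hC : G.IsTrailOn S C) (hT : G.IsTrailOn S T)
    (hclC : G.IsClosedL C) (hclT : G.IsClosedL T)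
    (hdisj : Disjoint (edgesOf C) (edgesOf T))
    (hww : G.stS (C.head hCne) = G.stS (T.head hTne)) :
    ∃ (L : List (E × Bool)) (hne : L ≠ []), G.IsTrailOn S L ∧ G.IsClosedL L ∧
      edgesOf L = edgesOf C ∪ edgesOf T := by
  have hedges : edgesOf (C ++ T) = edgesOf C ∪ edgesOf T := by
    simp [edgesOf, List.map_append]
  refine ⟨C ++ T, by simp [hCne], ⟨?_, ?_, ?_⟩, ?_, hedges⟩
  · rw [List.map_append]
    refine hC.1.append hT.1 ?_
    intro a ha hb
    exact Finset.disjoint_left.1 hdisj (by simpa [edgesOf] using ha)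
      (by simpa [edgesOf] using hb)
  · refine List.isChain_append.2 ⟨hC.2.1, hT.2.1, ?_⟩
    intro x hx y hy
    rw [List.getLast?_eq_getLast hCne, Option.mem_some_iff] at hx
    rw [List.head?_eq_head hTne, Option.mem_some_iff] at hy
    subst hx; subst hy
    rw [hclC hCne]
    exact hww
  · rw [hedges]
    exact Finset.union_subset hC.2.2 hT.2.2
  · intro hne
    have h1 : (C ++ T).getLast hne = T.getLast hTne := by
      rw [List.getLast_append]; simp [hTne]
    have h2 : (C ++ T).head hne = C.head hCne := by
      rw [List.head_append]; simp [hCne]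
    rw [h1, h2, hclT hTne, hww]

end SignedGraph
namespace SignedGraph

set_option linter.unusedSectionVars false

open Finset List

variable {V E : Type} [Fintype V] [Fintype E] [DecidableEq V] [DecidableEq E]

lemma euler_tour_aux (G : SignedGraph V E) {S : Finset E} (hconn : G.ConnOn S)
    (hval : ∀ v, Even (G.valencyOn S v)) :
    ∀ (n : ℕ) (T : List (E × Bool)), T ≠ [] → G.IsTrailOn S T → G.IsClosedL T →
      (S \ edgesOf T).card ≤ n →
      ∃ L, L ≠ [] ∧ G.IsTrailOn S L ∧ G.IsClosedL L ∧ edgesOf L = S := by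
  intro n
  induction n with
  | zero =>
    intro T hne hT hcl hcard
    refine ⟨T, hne, hT, hcl, ?_⟩
    have h0 : S \ edgesOf T = ∅ := Finset.card_eq_zero.1 (Nat.le_zero.1 hcard)
    exact Finset.Subset.antisymm hT.2.2 (Finset.sdiff_eq_empty_iff_subset.1 h0)
  | succ n ih =>
    intro T hne hT hcl hcard
    by_cases hTS : edgesOf T = S
    · exact ⟨T, hne, hT, hcl, hTS⟩
    · have hSTne : (S \ edgesOf T).Nonempty := by
        rw [Finset.sdiff_nonempty]
        exact fun hsub => hTS (Finset.Subset.antisymm hT.2.2 hsub)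
      have hTne' : (edgesOf T).Nonempty := by
        obtain ⟨p, T0, rfl⟩ := List.exists_cons_of_ne_nil hne
        exact ⟨p.1, by simp [edgesOf]⟩
      obtain ⟨w, hw1, hw2⟩ := exists_junction G hconn hT.2.2 hTne' hSTne
      have hval' : ∀ v, Even (G.valencyOn (S \ edgesOf T) v) := by
        intro v
        have h1 := G.valencyOn_sdiff hT.2.2 v
        have h2 := closed_even G hne hT.1 hT.2.1 hcl v
        have h3 := hval v
        rw [h1, Nat.even_iff] at h3
        rw [Nat.even_iff] at h2 ⊢
        omega
      obtain ⟨C, hCne, hCT, hCcl, hChead⟩ := exists_closed_at G (S \ edgesOf T) hval' hw2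
      obtain ⟨k, hk⟩ := exists_start_index G hT.2.1 hcl hw1
      obtain ⟨T', hT'ne, hT'T, hT'cl, hT'edges, hT'head⟩ := rotate_trail G hT hcl k
      have hCS : G.IsTrailOn S C := ⟨hCT.1, hCT.2.1, hCT.2.2.trans Finset.sdiff_subset⟩
      have hdisj : Disjoint (edgesOf C) (edgesOf T') := by
        rw [hT'edges]
        exact Finset.disjoint_left.2 (fun a ha => (Finset.mem_sdiff.1 (hCT.2.2 ha)).2)
      have hww : G.stS (C.head hCne) = G.stS (T'.head hT'ne) := by
        rw [hChead, hT'head, hk]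
      obtain ⟨L, hLne, hLT, hLcl, hLedges⟩ :=
        splice_closed G hCne hT'ne hCS hT'T hCcl hT'cl hdisj hww
      apply ih L hLne hLT hLcl
      have hsub : edgesOf T ⊆ edgesOf L := by
        rw [hLedges, ← hT'edges]
        exact Finset.subset_union_right
      have hCedge : ∃ a, a ∈ edgesOf C := by
        obtain ⟨p, C0, rfl⟩ := List.exists_cons_of_ne_nil hCne
        exact ⟨p.1, by simp [edgesOf]⟩
      have hss : S \ edgesOf L ⊂ S \ edgesOf T := by
        constructor
        · exact Finset.sdiff_subset_sdiff le_rfl hsub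
        · intro habs
          obtain ⟨a, ha⟩ := hCedge
          have haS' : a ∈ S \ edgesOf T := hCT.2.2 ha
          have haL : a ∈ S \ edgesOf L := habs haS'
          exact (Finset.mem_sdiff.1 haL).2
            (by rw [hLedges]; exact Finset.mem_union_left _ ha)
      have := Finset.card_lt_card hss
      omega

lemma euler_tour (G : SignedGraph V E) {S : Finset E} (hS : S.Nonempty)
    (hconn : G.ConnOn S) (hval : ∀ v, Even (G.valencyOn S v)) :
    ∃ L, L ≠ [] ∧ G.IsTrailOn S L ∧ G.IsClosedL L ∧ edgesOf L = S := by
  obtain ⟨e, he⟩ := hS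
  have hu : G.ends e false ∈ G.suppV S := mem_suppV.2 ⟨e, he, false, rfl⟩
  obtain ⟨T, hne, hT, hcl, -⟩ := exists_closed_at G S hval hu
  exact euler_tour_aux G hconn hval _ T hne hT hcl le_rfl

end SignedGraph
namespace SignedGraph

set_option linter.unusedSectionVars false
set_option maxHeartbeats 1000000

open Finset List

variable {V E : Type} [Fintype V] [Fintype E] [DecidableEq V] [DecidableEq E]

lemma fin_val_add_one (n : ℕ) (k : Fin (n + 1)) :
    ((k + 1 : Fin (n + 1))).val = (k.val + 1) % (n + 1) := by
  rcases Nat.lt_or_ge k.val n with h | h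
  · rw [Fin.val_add_one_of_lt (by rwa [Fin.lt_iff_val_lt_val, Fin.val_last]),
      Nat.mod_eq_of_lt (by omega)]
  · have hk : k = Fin.last n := Fin.ext (by have := k.isLt; simp [Fin.val_last]; omega)
    rw [hk, Fin.last_add_one]
    simp [Fin.val_last]

lemma ite_dir (c : Prop) [Decidable c] (x : ℤ) :
    (if c then x else -x) = (if c then (1 : ℤ) else -1) * x := by
  split <;> ring

lemma orient_sign (G : SignedGraph V E) (O : G.Orientation) (e : E) (i : Bool) :
    (if O.dir e (!i) then (1 : ℤ) else -1) * (if O.dir e i then (1 : ℤ) else -1)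
      = -((G.sign e : ℤˣ) : ℤ) := by
  have hc := O.compat e
  have hsor := Int.units_eq_one_or (G.sign e)
  by_cases heq : O.dir e false = O.dir e true
  · have hsign : G.sign e = -1 := hsor.resolve_left (fun h => absurd heq (hc.1 h))
    have hii : O.dir e (!i) = O.dir e i := by
      cases i
      · exact heq.symm
      · exact heq
    rw [hii, hsign]
    split <;> norm_num
  · have hsign : G.sign e = 1 := hc.2 heq
    have hii : O.dir e (!i) = !(O.dir e i) := by
      cases i <;> cases h1 : O.dir e false <;> cases h2 : O.dir e true <;> simp_all
    rw [hii, hsign]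
    cases h : O.dir e i <;> simp [h]

lemma flow_of_eulerianOn (G : SignedGraph V E) (O : G.Orientation) {S : Finset E}
    (hS : G.EulerianOn S) (hev : Even (G.negEdges S).card) :
    ∃ φ : E → ℤ, G.IsFlow O φ ∧ (∀ e ∈ S, φ e = 1 ∨ φ e = -1) ∧ ∀ e ∉ S, φ e = 0 := by
  classical
  obtain ⟨hSne, hconn, hval⟩ := hS
  obtain ⟨L, hLne, ⟨hnd, hch, hsubS⟩, hcl, hedges⟩ := euler_tour G hSne hconn hval
  obtain ⟨n, hn⟩ : ∃ n, L.length = n + 1 := by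
    obtain ⟨p, L0, rfl⟩ := List.exists_cons_of_ne_nil hLne
    exact ⟨L0.length, rfl⟩
  set g : Fin (n + 1) → E × Bool := fun k => L.get ⟨k.val, by rw [hn]; exact k.isLt⟩ with hg
  -- core facts about g
  have ginj : Function.Injective (fun k : Fin (n + 1) => (g k).1) := by
    intro a b hab
    simp only [hg] at hab
    have hla : a.val < (L.map Prod.fst).length := by rw [List.length_map, hn]; exact a.isLt
    have hlb : b.val < (L.map Prod.fst).length := by rw [List.length_map, hn]; exact b.isLt
    have h1 : (L.map Prod.fst).get ⟨a.val, hla⟩ = (L.map Prod.fst).get ⟨b.val, hlb⟩ := by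
      simp only [List.get_eq_getElem, List.getElem_map]
      exact hab
    have h2 := congrArg Fin.val ((hnd.get_inj_iff).1 h1)
    exact Fin.ext h2
  have gmem : ∀ k, (g k).1 ∈ S := by
    intro k
    rw [← hedges, edgesOf, List.mem_toFinset]
    exact List.mem_map_of_mem (List.get_mem _ _)
  have gsurj : ∀ e ∈ S, ∃ k, (g k).1 = e := by
    intro e he
    rw [← hedges, edgesOf, List.mem_toFinset] at he
    obtain ⟨m, hm⟩ := List.mem_iff_get.1 he
    have hlt : m.val < n + 1 := by
      have h2 : (List.map Prod.fst L).length = n + 1 := by rw [List.length_map, hn]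
      have h3 := m.isLt
      omega
    refine ⟨⟨m.val, hlt⟩, ?_⟩
    rw [← hm]; simp; rfl
  have glink : ∀ k : Fin (n + 1), G.stE (g k) = G.stS (g (k + 1)) := by
    intro k
    have hklt : k.val < L.length := by rw [hn]; exact k.isLt
    have h := closed_get G hch hcl k.val hklt
    have hidx : ((k + 1 : Fin (n + 1))).val = (k.val + 1) % L.length := by
      rw [hn]; exact fin_val_add_one n k
    have hgk1 : g (k + 1) = L.get ⟨(k.val + 1) % L.length, Nat.mod_lt _ (by omega)⟩ := by
      simp only [hg]
      congr 1
      exact Fin.mk_eq_mk.2 hidx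
    rw [hgk1]
    exact h
  -- signs along the tour
  set s : Fin (n + 1) → ℤˣ := fun k => G.sign (g k).1 with hs
  have hprod : ∏ k, s k = 1 := by
    have hb : ∏ k : Fin (n + 1), G.sign (g k).1 = ∏ e ∈ S, G.sign e := by
      apply Finset.prod_bij (fun k _ => (g k).1)
      · intro a _; exact gmem a
      · intro a _ b _ hab; exact ginj hab
      · intro e he
        obtain ⟨k, hk⟩ := gsurj e he
        exact ⟨k, Finset.mem_univ k, hk⟩
      · intro a _; rfl
    calc ∏ k, s k = ∏ e ∈ S, G.sign e := hb
      _ = G.signOf S := rfl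
      _ = 1 := signOf_eq_one_of_even hev
  set sN : ℕ → ℤˣ := fun j => if h : j < n + 1 then s ⟨j, h⟩ else 1 with hsN
  set d : Fin (n + 1) → ℤˣ := fun k => ∏ j ∈ Finset.range k.val, sN j with hd
  have hsNval : ∀ k : Fin (n + 1), sN k.val = s k := by
    intro k
    simp only [hsN]
    rw [dif_pos k.isLt]
  have hdstep : ∀ k : Fin (n + 1), d (k + 1) = d k * s k := by
    intro k
    by_cases hkn : k.val < n
    · have h1 : ((k + 1 : Fin (n + 1))).val = k.val + 1 := by
        rw [fin_val_add_one]; exact Nat.mod_eq_of_lt (by omega)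
      simp only [hd]
      rw [h1, Finset.prod_range_succ, hsNval k]
    · have hk : k.val = n := by have := k.isLt; omega
      have h1 : ((k + 1 : Fin (n + 1))).val = 0 := by
        rw [fin_val_add_one, hk]
        exact Nat.mod_self _
      have h2 : d (k + 1) = 1 := by simp only [hd]; rw [h1]; simp
      have h3 : d k * s k = ∏ j ∈ Finset.range (n + 1), sN j := by
        simp only [hd]
        rw [hk, Finset.prod_range_succ]
        congr 1
        rw [← hsNval k, hk]
      have h4 : ∏ j ∈ Finset.range (n + 1), sN j = ∏ k : Fin (n + 1), s k := by
        rw [← Fin.prod_univ_eq_prod_range]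
        exact Finset.prod_congr rfl (fun k _ => hsNval k)
      rw [h2, h3, h4, hprod]
  -- the flow
  set δ : Fin (n + 1) → ℤ := fun k => if O.dir (g k).1 (g k).2 then 1 else -1 with hδ
  set φ : E → ℤ := fun e =>
    if h : ∃ k, (g k).1 = e then ((d h.choose : ℤˣ) : ℤ) * δ h.choose else 0 with hφ
  have hφg : ∀ k, φ (g k).1 = ((d k : ℤˣ) : ℤ) * δ k := by
    intro k
    simp only [hφ]
    have hex : ∃ j, (g j).1 = (g k).1 := ⟨k, rfl⟩
    rw [dif_pos hex]
    have hck : hex.choose = k := ginj hex.choose_spec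
    rw [hck]
  have hφ0 : ∀ e ∉ S, φ e = 0 := by
    intro e he
    simp only [hφ]
    rw [dif_neg]
    rintro ⟨k, hk⟩
    exact he (hk ▸ gmem k)
  have hφval : ∀ e ∈ S, φ e = 1 ∨ φ e = -1 := by
    intro e he
    obtain ⟨k, hk⟩ := gsurj e he
    rw [← hk, hφg k]
    have hδv : δ k = 1 ∨ δ k = -1 := by
      simp only [hδ]; split
      · exact Or.inl rfl
      · exact Or.inr rfl
    rcases Int.units_eq_one_or (d k) with h | h <;> rcases hδv with h2 | h2 <;>
      rw [h, h2] <;> norm_num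
  refine ⟨φ, ?_, hφval, hφ0⟩
  intro v
  rw [Finset.sum_filter]
  have hzero : ∀ p : E × Bool, p ∈ (univ : Finset (E × Bool)) →
      p ∉ univ.filter (fun p : E × Bool => p.1 ∈ S) →
      (if G.ends p.1 p.2 = v then (if O.dir p.1 p.2 then φ p.1 else -φ p.1) else 0) = 0 := by
    intro p _ hp
    rw [Finset.mem_filter] at hp
    push_neg at hp
    have hpS : p.1 ∉ S := hp (Finset.mem_univ p)
    rw [hφ0 p.1 hpS]
    split <;> simp
  rw [← Finset.sum_subset (Finset.filter_subset (fun p : E × Bool => p.1 ∈ S) univ) hzero]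
  -- reindex by the tour
  set ι : Fin (n + 1) × Bool → E × Bool :=
    fun q => ((g q.1).1, if q.2 then !(g q.1).2 else (g q.1).2) with hι
  have hbij : ∑ p ∈ univ.filter (fun p : E × Bool => p.1 ∈ S),
      (if G.ends p.1 p.2 = v then (if O.dir p.1 p.2 then φ p.1 else -φ p.1) else 0)
      = ∑ q : Fin (n + 1) × Bool,
        (if G.ends (ι q).1 (ι q).2 = v then
          (if O.dir (ι q).1 (ι q).2 then φ (ι q).1 else -φ (ι q).1) else 0) := by
    refine (Finset.sum_bij (fun q _ => ι q) ?_ ?_ ?_ ?_).symm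
    · intro q _
      rw [Finset.mem_filter]
      exact ⟨Finset.mem_univ _, gmem q.1⟩
    · intro a ha b hb hab
      obtain ⟨a1, a2⟩ := a
      obtain ⟨b1, b2⟩ := b
      simp only [hι, Prod.mk.injEq] at hab
      obtain ⟨hab1, hab2⟩ := hab
      have h1 : a1 = b1 := ginj hab1
      subst h1
      have h2 : a2 = b2 := by
        generalize (g a1).2 = x at hab2
        cases a2 <;> cases b2 <;> cases x <;>
          first
          | rfl
          | exact absurd hab2 (by decide)
      rw [h2]
    · intro p hp
      rw [Finset.mem_filter] at hp
      obtain ⟨k, hk⟩ := gsurj p.1 hp.2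
      by_cases hj : p.2 = (g k).2
      · refine ⟨(k, false), Finset.mem_univ _, ?_⟩
        show ((g k).1, if (false : Bool) = true then !(g k).2 else (g k).2) = p
        rw [if_neg (by decide), hk, ← hj]
      · have hj' : p.2 = !(g k).2 := Bool.eq_not_of_ne hj
        refine ⟨(k, true), Finset.mem_univ _, ?_⟩
        show ((g k).1, if (true : Bool) = true then !(g k).2 else (g k).2) = p
        rw [if_pos rfl, hk, ← hj']
    · intro q _; rfl
  rw [hbij, Fintype.sum_prod_type]
  -- the two half-edge contributions
  set A : Fin (n + 1) → ℤ := fun k => if G.stS (g k) = v then ((d k : ℤˣ) : ℤ) else 0 with hA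
  have hδδ : ∀ k, δ k * δ k = 1 := by
    intro k
    simp only [hδ]; split <;> norm_num
  have hfalse : ∀ k : Fin (n + 1),
      (if G.ends (ι (k, false)).1 (ι (k, false)).2 = v then
        (if O.dir (ι (k, false)).1 (ι (k, false)).2 then φ (ι (k, false)).1
          else -φ (ι (k, false)).1) else 0) = A k := by
    intro k
    have hιk : ι (k, false) = ((g k).1, (g k).2) := by simp [hι]
    rw [hιk]
    have hinner : (if O.dir (g k).1 (g k).2 then φ (g k).1 else -φ (g k).1)
        = ((d k : ℤˣ) : ℤ) := by
      rw [ite_dir, hφg k]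
      calc (if O.dir (g k).1 (g k).2 then (1:ℤ) else -1) * (((d k : ℤˣ) : ℤ) * δ k)
          = (δ k * δ k) * ((d k : ℤˣ) : ℤ) := by simp only [hδ]; ring
        _ = ((d k : ℤˣ) : ℤ) := by rw [hδδ k]; ring
    rw [hinner]
    rfl
  have htrue : ∀ k : Fin (n + 1),
      (if G.ends (ι (k, true)).1 (ι (k, true)).2 = v then
        (if O.dir (ι (k, true)).1 (ι (k, true)).2 then φ (ι (k, true)).1
          else -φ (ι (k, true)).1) else 0) = -(A (k + 1)) := by
    intro k
    have hιk : ι (k, true) = ((g k).1, !(g k).2) := by simp [hι]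
    rw [hιk]
    have hinner : (if O.dir (g k).1 (!(g k).2) then φ (g k).1 else -φ (g k).1)
        = -((d (k + 1) : ℤˣ) : ℤ) := by
      rw [ite_dir, hφg k]
      have ho := orient_sign G O (g k).1 (g k).2
      calc (if O.dir (g k).1 (!(g k).2) then (1:ℤ) else -1) * (((d k : ℤˣ) : ℤ) * δ k)
          = ((if O.dir (g k).1 (!(g k).2) then (1:ℤ) else -1)
              * (if O.dir (g k).1 (g k).2 then (1:ℤ) else -1)) * ((d k : ℤˣ) : ℤ) := by
            simp only [hδ]; ring
        _ = -((G.sign (g k).1 : ℤˣ) : ℤ) * ((d k : ℤˣ) : ℤ) := by rw [ho]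
        _ = -((d (k + 1) : ℤˣ) : ℤ) := by
            rw [hdstep k, Units.val_mul]
            simp only [hs]
            push_cast
            ring
    rw [hinner]
    have hEv : G.ends (g k).1 (!(g k).2) = G.stS (g (k + 1)) := glink k
    simp only [hEv]
    simp only [hA]
    split <;> simp
  calc ∑ k : Fin (n + 1), ∑ b : Bool,
      (if G.ends (ι (k, b)).1 (ι (k, b)).2 = v then
        (if O.dir (ι (k, b)).1 (ι (k, b)).2 then φ (ι (k, b)).1 else -φ (ι (k, b)).1) else 0)
      = ∑ k : Fin (n + 1), (-(A (k + 1)) + A k) := by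
        refine Finset.sum_congr rfl (fun k _ => ?_)
        rw [Fintype.sum_bool, hfalse k, htrue k]
    _ = (∑ k : Fin (n + 1), -(A (k + 1))) + ∑ k : Fin (n + 1), A k := Finset.sum_add_distrib
    _ = 0 := by
        rw [Finset.sum_neg_distrib]
        have : ∑ k : Fin (n + 1), A (k + 1) = ∑ k : Fin (n + 1), A k :=
          Equiv.sum_comp (Equiv.addRight (1 : Fin (n + 1))) A
        rw [this]
        ring

end SignedGraph
namespace SignedGraph

set_option linter.unusedSectionVars false

open Finset List

variable {V E : Type} [Fintype V] [Fintype E] [DecidableEq V] [DecidableEq E]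

/-- A canonical orientation of a signed graph. -/
def defaultOrientation (G : SignedGraph V E) : G.Orientation where
  dir := fun e i => if G.sign e = 1 then i else true
  compat := by
    intro e
    by_cases h : G.sign e = 1 <;> simp [h]

end SignedGraph

open SignedGraph Finset in
theorem stmt13' {V E : Type} [Fintype V] [Fintype E] [DecidableEq V]
    [DecidableEq E] (G : SignedGraph V E) (hG : G.Eulerian)
    (hcov : ∃ H₁ H₂ : Finset E,
      G.EulerianOn H₁ ∧ G.EulerianOn H₂ ∧
      Even (G.negEdges H₁).card ∧ Even (G.negEdges H₂).card ∧
      H₁ ∪ H₂ = univ) :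
    G.HasNZkFlow 4 := by
  classical
  obtain ⟨H₁, H₂, hE1, hE2, hev1, hev2, hcup⟩ := hcov
  set O := G.defaultOrientation with hO
  obtain ⟨φ₁, hf1, hval1, h01⟩ := flow_of_eulerianOn G O hE1 hev1
  obtain ⟨φ₂, hf2, hval2, h02⟩ := flow_of_eulerianOn G O hE2 hev2
  refine ⟨O, fun e => φ₁ e + 2 * φ₂ e, ?_, ?_⟩
  · intro v
    have h1 := hf1 v
    have h2 := hf2 v
    have hsplit : ∀ p : E × Bool,
        (if O.dir p.1 p.2 then φ₁ p.1 + 2 * φ₂ p.1 else -(φ₁ p.1 + 2 * φ₂ p.1))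
        = (if O.dir p.1 p.2 then φ₁ p.1 else -φ₁ p.1)
          + 2 * (if O.dir p.1 p.2 then φ₂ p.1 else -φ₂ p.1) := by
      intro p; split <;> ring
    calc ∑ p ∈ univ.filter (fun p : E × Bool => G.ends p.1 p.2 = v),
          (if O.dir p.1 p.2 then φ₁ p.1 + 2 * φ₂ p.1 else -(φ₁ p.1 + 2 * φ₂ p.1))
        = ∑ p ∈ univ.filter (fun p : E × Bool => G.ends p.1 p.2 = v),
          ((if O.dir p.1 p.2 then φ₁ p.1 else -φ₁ p.1)
            + 2 * (if O.dir p.1 p.2 then φ₂ p.1 else -φ₂ p.1)) :=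
          Finset.sum_congr rfl (fun p _ => hsplit p)
      _ = (∑ p ∈ univ.filter (fun p : E × Bool => G.ends p.1 p.2 = v),
            (if O.dir p.1 p.2 then φ₁ p.1 else -φ₁ p.1))
          + 2 * ∑ p ∈ univ.filter (fun p : E × Bool => G.ends p.1 p.2 = v),
            (if O.dir p.1 p.2 then φ₂ p.1 else -φ₂ p.1) := by
          rw [Finset.sum_add_distrib, Finset.mul_sum]
      _ = 0 := by rw [h1, h2]; ring
  · intro e
    show φ₁ e + 2 * φ₂ e ≠ 0 ∧ |φ₁ e + 2 * φ₂ e| < ((4 : ℕ) : ℤ)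
    have he12 : e ∈ H₁ ∨ e ∈ H₂ := by
      have : e ∈ H₁ ∪ H₂ := by rw [hcup]; exact Finset.mem_univ e
      exact Finset.mem_union.1 this
    by_cases he1 : e ∈ H₁
    · have hv2 : φ₂ e = 0 ∨ φ₂ e = 1 ∨ φ₂ e = -1 := by
        by_cases he2 : e ∈ H₂
        · rcases hval2 e he2 with h | h
          · exact Or.inr (Or.inl h)
          · exact Or.inr (Or.inr h)
        · exact Or.inl (h02 e he2)
      rcases hval1 e he1 with h1 | h1 <;> rcases hv2 with h2 | h2 | h2 <;>
        rw [h1, h2] <;> norm_num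
    · have h1 : φ₁ e = 0 := h01 e he1
      have he2 : e ∈ H₂ := he12.resolve_left he1
      rcases hval2 e he2 with h2 | h2 <;> rw [h1, h2] <;> norm_num


open SignedGraph Finset in
/-- If a signed eulerian graph `G` is the union of two eulerian
subgraphs each having an even number of negative edges, then `G` admits a
nowhere-zero `4`-flow. -/
theorem stmt13 {V E : Type} [Fintype V] [Fintype E] [DecidableEq V]
    [DecidableEq E] (G : SignedGraph V E) (hG : G.Eulerian)
    (hcov : ∃ H₁ H₂ : Finset E,
      G.EulerianOn H₁ ∧ G.EulerianOn H₂ ∧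
      Even (G.negEdges H₁).card ∧ Even (G.negEdges H₂).card ∧
      H₁ ∪ H₂ = univ) :
    G.HasNZkFlow 4 := by
  exact stmt13' G hG hcov
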